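/- arXiv:math/0403334 — 3 statements merged into one kernel-verified Lean document; each statement's English description precedes it below -/
import Mathlib

section
/- Let * be a star product on A[[ν]] adapted to an ideal I of A, and let ρ be its canonical representation on A[[ν]]/I[[ν]]. Define the *-idealizer N_*(I) := { h ∈ A[[ν]] : g*h ∈ I[[ν]] for all g ∈ I[[ν]] }. Then: (a) N_*(I) is a unital subalgebra of (A[[ν]],*) containing I[[ν]] as a two-sided ideal; (b) the commutant of the representation, i.e. the algebra of all K[[ν]]-linear endomorphisms D of A[[ν]]/I[[ν]] commuting with every ρ(f), is isomorphic as a K[[ν]]-algebra to the opposite algebra of the quotient N_*(I)/I[[ν]], via h ↦ D_h where D_h(f + I[[ν]]) := (f*h) + I[[ν]]. -/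
open Finset PowerSeries

/-- A formal deformation (star product) of a commutative unital `K`-algebra `A`. -/
structure StarProd (K A : Type*) [Field K] [CommRing A] [Algebra K A] where
  C : ℕ → A →ₗ[K] A →ₗ[K] A
  C_zero : ∀ f g : A, C 0 f g = f * g
  C_one_left : ∀ r : ℕ, 0 < r → ∀ f : A, C r 1 f = 0
  C_one_right : ∀ r : ℕ, 0 < r → ∀ f : A, C r f 1 = 0
  assoc : ∀ (t : ℕ) (f g h : A),
    ∑ p ∈ Finset.HasAntidiagonal.antidiagonal t, C p.1 (C p.2 f g) h
      = ∑ p ∈ Finset.HasAntidiagonal.antidiagonal t, C p.1 f (C p.2 g h)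

namespace StarProd

variable {K A : Type*} [Field K] [CommRing A] [Algebra K A]

/-- The induced `K[[ν]]`-bilinear multiplication `f * g = ∑ ν^r C_r(f,g)` on `A[[ν]]`. -/
noncomputable def mul (D : StarProd K A) (f g : PowerSeries A) : PowerSeries A :=
  PowerSeries.mk fun t =>
    ∑ p ∈ Finset.HasAntidiagonal.antidiagonal t, ∑ q ∈ Finset.HasAntidiagonal.antidiagonal p.2,
      D.C p.1 (PowerSeries.coeff q.1 f) (PowerSeries.coeff q.2 g)

end StarProd

/-- `I[[ν]]`: the formal power series all of whose coefficients lie in the ideal `I`. -/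
def idealSeries {A : Type*} [CommRing A] (I : Ideal A) : Ideal (PowerSeries A) where
  carrier := {x | ∀ n, PowerSeries.coeff n x ∈ I}
  add_mem' hx hy n := by
    rw [map_add]; exact I.add_mem (hx n) (hy n)
  zero_mem' n := by
    rw [map_zero]; exact I.zero_mem
  smul_mem' c x hx := by
    intro n
    rw [smul_eq_mul, PowerSeries.coeff_mul]
    exact Ideal.sum_mem I fun p _ => I.mul_mem_left _ (hx p.2)

/-!
The coefficients `C_r` make `A[[ν]]` an associative unital algebra: associativity is the
coefficientwise identity `StarProd.assoc` once the five-fold convolution sums on both sides are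
regrouped, and `K[[ν]]`-bilinearity follows from associativity because `C_r(1, ·) = 0 = C_r(·, 1)`
for `r > 0` makes `c • f = (c • 1) * f = f * (c • 1)`. Since `I[[ν]]` is a left ideal, right
multiplication by `h` descends to `A[[ν]]/I[[ν]]` exactly when `h` lies in the idealizer, and it
commutes with every `ρ(f)` by associativity. Conversely a commutant element `T` is right
multiplication by any lift `h` of `T(1 + I[[ν]])`, as `T(f + I[[ν]]) = T(ρ(f)(1 + I[[ν]])) =
ρ(f)(h + I[[ν]])`.
-/

section PowerSeriesCoeff

variable {R A : Type*} [CommSemiring R] [CommSemiring A] [Algebra R A]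

lemma Finset.Nat.sum_antidiagonal_ite_fst_eq_zero {M : Type*} [AddCommMonoid M] (t : ℕ)
    (G : ℕ × ℕ → M) : ∑ p ∈ antidiagonal t, (if p.1 = 0 then G p else 0) = G (0, t) := by
  simp [Finset.Nat.sum_antidiagonal_eq_sum_range_succ_mk]

lemma PowerSeries.coeff_algebraMap_powerSeries (c : R⟦X⟧) (n : ℕ) :
    coeff n (algebraMap R⟦X⟧ A⟦X⟧ c) = coeff n c • 1 := by
  rw [algebraMap_apply'', coeff_map, Algebra.algebraMap_eq_smul_one]

lemma PowerSeries.coeff_powerSeries_smul (c : R⟦X⟧) (f : A⟦X⟧) (n : ℕ) :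
    coeff n (c • f) = ∑ q ∈ antidiagonal n, coeff q.1 c • coeff q.2 f := by
  simp [Algebra.smul_def, algebraMap_apply'', coeff_mul]

end PowerSeriesCoeff

namespace StarProd

variable {K A : Type*} [Field K] [CommRing A] [Algebra K A] (D : StarProd K A)

@[simp]
lemma coeff_mul (f g : A⟦X⟧) (t : ℕ) :
    coeff t (D.mul f g) = ∑ p ∈ antidiagonal t, ∑ q ∈ antidiagonal p.2,
      D.C p.1 (coeff q.1 f) (coeff q.2 g) :=
  coeff_mk _ _

lemma mul_add (f g g' : A⟦X⟧) : D.mul f (g + g') = D.mul f g + D.mul f g' := by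
  ext; simp [sum_add_distrib]

lemma add_mul (f f' g : A⟦X⟧) : D.mul (f + f') g = D.mul f g + D.mul f' g := by
  ext; simp [sum_add_distrib]

lemma C_one_left_eq (r : ℕ) (x : A) : D.C r 1 x = if r = 0 then x else 0 := by
  split_ifs with hr
  · rw [hr, D.C_zero, one_mul]
  · exact D.C_one_left r (Nat.pos_of_ne_zero hr) x

lemma C_one_right_eq (r : ℕ) (x : A) : D.C r x 1 = if r = 0 then x else 0 := by
  split_ifs with hr
  · rw [hr, D.C_zero, mul_one]
  · exact D.C_one_right r (Nat.pos_of_ne_zero hr) x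

lemma algebraMap_mul (c : K⟦X⟧) (f : A⟦X⟧) : D.mul (algebraMap K⟦X⟧ A⟦X⟧ c) f = c • f := by
  ext t
  simp only [coeff_mul, coeff_algebraMap_powerSeries, map_smul, LinearMap.smul_apply,
    C_one_left_eq, smul_ite, smul_zero, sum_ite_irrel, sum_const_zero]
  rw [Finset.Nat.sum_antidiagonal_ite_fst_eq_zero, coeff_powerSeries_smul]

lemma mul_algebraMap (c : K⟦X⟧) (f : A⟦X⟧) : D.mul f (algebraMap K⟦X⟧ A⟦X⟧ c) = c • f := by
  ext t
  simp only [coeff_mul, coeff_algebraMap_powerSeries, map_smul, C_one_right_eq, smul_ite,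
    smul_zero, sum_ite_irrel, sum_const_zero]
  rw [Finset.Nat.sum_antidiagonal_ite_fst_eq_zero, coeff_powerSeries_smul,
    ← Finset.Nat.sum_antidiagonal_swap]
  rfl

lemma one_mul (f : A⟦X⟧) : D.mul 1 f = f := by
  simpa using D.algebraMap_mul 1 f

lemma mul_one (f : A⟦X⟧) : D.mul f 1 = f := by
  simpa using D.mul_algebraMap 1 f

lemma coeff_mul_mul_left (f g h : A⟦X⟧) (t : ℕ) :
    coeff t (D.mul (D.mul f g) h) =
      ∑ s ∈ antidiagonal t, ∑ x ∈ antidiagonal s.2, ∑ y ∈ antidiagonal x.2, ∑ p ∈ antidiagonal s.1,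
        D.C p.1 (D.C p.2 (coeff x.1 f) (coeff y.1 g)) (coeff y.2 h) := by
  simp only [coeff_mul, map_sum, LinearMap.sum_apply, sum_sigma']
  apply sum_nbij'
    (fun ⟨⟨a, _⟩, ⟨_, c⟩, ⟨d, _⟩, ⟨e, k⟩⟩ ↦ ⟨(a + d, e + k + c), (e, k + c), (k, c), (a, d)⟩)
    (fun ⟨_, ⟨e, _⟩, ⟨k, c⟩, ⟨a, d⟩⟩ ↦ ⟨(a, d + e + k + c), (d + e + k, c), (d, e + k), (e, k)⟩)
  all_goals
    rintro ⟨⟨_, _⟩, ⟨_, _⟩, ⟨_, _⟩, _, _⟩ hx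
    simp only [mem_sigma, HasAntidiagonal.mem_antidiagonal, Sigma.mk.injEq, Prod.mk.injEq,
      heq_eq_eq, and_true, true_and] at hx ⊢
  all_goals omega

lemma coeff_mul_mul_right (f g h : A⟦X⟧) (t : ℕ) :
    coeff t (D.mul f (D.mul g h)) =
      ∑ s ∈ antidiagonal t, ∑ x ∈ antidiagonal s.2, ∑ y ∈ antidiagonal x.2, ∑ p ∈ antidiagonal s.1,
        D.C p.1 (coeff x.1 f) (D.C p.2 (coeff y.1 g) (coeff y.2 h)) := by
  simp only [coeff_mul, map_sum, sum_sigma']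
  apply sum_nbij'
    (fun ⟨⟨a, _⟩, ⟨e, _⟩, ⟨d, _⟩, ⟨k, c⟩⟩ ↦ ⟨(a + d, e + k + c), (e, k + c), (k, c), (a, d)⟩)
    (fun ⟨_, ⟨e, _⟩, ⟨k, c⟩, ⟨a, d⟩⟩ ↦ ⟨(a, d + e + k + c), (e, d + k + c), (d, k + c), (k, c)⟩)
  all_goals
    rintro ⟨⟨_, _⟩, ⟨_, _⟩, ⟨_, _⟩, _, _⟩ hx
    simp only [mem_sigma, HasAntidiagonal.mem_antidiagonal, Sigma.mk.injEq, Prod.mk.injEq,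
      heq_eq_eq, and_true, true_and] at hx ⊢
  all_goals omega

lemma mul_assoc (f g h : A⟦X⟧) : D.mul (D.mul f g) h = D.mul f (D.mul g h) := by
  ext t
  rw [coeff_mul_mul_left, coeff_mul_mul_right]
  exact sum_congr rfl fun s _ ↦ sum_congr rfl fun x _ ↦ sum_congr rfl fun y _ ↦ D.assoc s.1 _ _ _

lemma smul_mul (c : K⟦X⟧) (f g : A⟦X⟧) : D.mul (c • f) g = c • D.mul f g := by
  rw [← D.algebraMap_mul, D.mul_assoc, D.algebraMap_mul]

lemma mul_smul (c : K⟦X⟧) (f g : A⟦X⟧) : D.mul f (c • g) = c • D.mul f g := by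
  rw [← D.algebraMap_mul, ← D.mul_assoc, D.mul_algebraMap, D.smul_mul]

noncomputable def mulₗ : A⟦X⟧ →ₗ[K⟦X⟧] A⟦X⟧ →ₗ[K⟦X⟧] A⟦X⟧ :=
  LinearMap.mk₂ K⟦X⟧ D.mul D.add_mul D.smul_mul D.mul_add D.mul_smul

lemma mul_sub (f g g' : A⟦X⟧) : D.mul f (g - g') = D.mul f g - D.mul f g' :=
  map_sub (D.mulₗ f) g g'

def IsAdapted (I : Ideal A) : Prop :=
  ∀ f g : A⟦X⟧, g ∈ idealSeries I → D.mul f g ∈ idealSeries I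

def idealizer (I : Ideal A) : Submodule K⟦X⟧ A⟦X⟧ where
  carrier := {h | ∀ g ∈ idealSeries I, D.mul g h ∈ idealSeries I}
  add_mem' ha hb g hg := by
    rw [D.mul_add]; exact add_mem (ha g hg) (hb g hg)
  zero_mem' g _ := by
    rw [show D.mul g 0 = 0 from (D.mulₗ g).map_zero]; exact zero_mem _
  smul_mem' c h hh g hg := by
    rw [D.mul_smul]; exact Submodule.smul_of_tower_mem _ c (hh g hg)

variable {D} {I : Ideal A}

lemma one_mem_idealizer : (1 : A⟦X⟧) ∈ D.idealizer I := fun g hg ↦ by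
  rwa [D.mul_one]

lemma mul_mem_idealizer {h₁ h₂ : A⟦X⟧} (hh₁ : h₁ ∈ D.idealizer I) (hh₂ : h₂ ∈ D.idealizer I) :
    D.mul h₁ h₂ ∈ D.idealizer I := fun g hg ↦ by
  rw [← D.mul_assoc]; exact hh₂ _ (hh₁ g hg)

lemma idealSeries_le_idealizer (hadapt : D.IsAdapted I) :
    (idealSeries I).restrictScalars K⟦X⟧ ≤ D.idealizer I :=
  fun g hg g' _ ↦ hadapt g' g hg

/-- The paper's `D_h`; `hh` unfolds to the inclusion `I[[ν]] * h ⊆ I[[ν]]` that `mapQ` needs. -/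
noncomputable def mulRightQuot {h : A⟦X⟧} (hh : h ∈ D.idealizer I) :
    Module.End K⟦X⟧ (A⟦X⟧ ⧸ idealSeries I) :=
  Submodule.mapQ ((idealSeries I).restrictScalars K⟦X⟧) ((idealSeries I).restrictScalars K⟦X⟧)
    (D.mulₗ.flip h) hh

@[simp]
lemma mulRightQuot_mk {h : A⟦X⟧} (hh : h ∈ D.idealizer I) (f : A⟦X⟧) :
    mulRightQuot hh (Ideal.Quotient.mk _ f) = Ideal.Quotient.mk _ (D.mul f h) :=
  rfl

lemma mk_mul_eq_mk_mul_iff (hadapt : D.IsAdapted I) (h h' : A⟦X⟧) :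
    (∀ f, Ideal.Quotient.mk (idealSeries I) (D.mul f h) = Ideal.Quotient.mk _ (D.mul f h')) ↔
      h - h' ∈ idealSeries I := by
  simp only [Ideal.Quotient.eq, ← D.mul_sub]
  exact ⟨fun H ↦ by simpa only [D.one_mul] using H 1, fun H f ↦ hadapt f _ H⟩

section Commutant

variable {ρ : A⟦X⟧ → Module.End K⟦X⟧ (A⟦X⟧ ⧸ idealSeries I)}

lemma mulRightQuot_commute
    (hρ : ∀ f g : A⟦X⟧, ρ f (Ideal.Quotient.mk _ g) = Ideal.Quotient.mk _ (D.mul f g))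
    {h : A⟦X⟧} (hh : h ∈ D.idealizer I) (f : A⟦X⟧) :
    mulRightQuot hh * ρ f = ρ f * mulRightQuot hh := by
  refine LinearMap.ext fun x ↦ ?_
  obtain ⟨g, rfl⟩ := Ideal.Quotient.mk_surjective x
  rw [Module.End.mul_apply, Module.End.mul_apply, hρ, mulRightQuot_mk, mulRightQuot_mk, hρ,
    D.mul_assoc]

lemma exists_mem_idealizer_of_commute
    (hρ : ∀ f g : A⟦X⟧, ρ f (Ideal.Quotient.mk _ g) = Ideal.Quotient.mk _ (D.mul f g))
    (T : Module.End K⟦X⟧ (A⟦X⟧ ⧸ idealSeries I)) (hT : ∀ f, T * ρ f = ρ f * T) :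
    ∃ h ∈ D.idealizer I, ∀ f, T (Ideal.Quotient.mk _ f) = Ideal.Quotient.mk _ (D.mul f h) := by
  obtain ⟨h, hh⟩ := Ideal.Quotient.mk_surjective (T (Ideal.Quotient.mk _ 1))
  have hT_mk (f : A⟦X⟧) : T (Ideal.Quotient.mk _ f) = Ideal.Quotient.mk _ (D.mul f h) := by
    have hT_one := LinearMap.congr_fun (hT f) (Ideal.Quotient.mk _ 1)
    simp only [Module.End.mul_apply, hρ, D.mul_one] at hT_one
    rw [hT_one, ← hh, hρ]
  refine ⟨h, fun g hg ↦ ?_, hT_mk⟩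
  rw [← Ideal.Quotient.eq_zero_iff_mem, ← hT_mk, Ideal.Quotient.eq_zero_iff_mem.mpr hg, map_zero]

end Commutant

end StarProd

theorem statement3_general {K A : Type*} [Field K] [CommRing A] [Algebra K A]
    (D : StarProd K A) (I : Ideal A)
    (hadapt : ∀ f g : PowerSeries A, g ∈ idealSeries I → D.mul f g ∈ idealSeries I)
    (ρ : PowerSeries A → Module.End (PowerSeries K) (PowerSeries A ⧸ idealSeries I))
    (hρ : ∀ f g : PowerSeries A,
      ρ f (Ideal.Quotient.mk (idealSeries I) g) = Ideal.Quotient.mk (idealSeries I) (D.mul f g)) :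
    -- (a) `N_*(I)` is a unital subalgebra containing `I[[ν]]` as a two-sided ideal
    ((1 : PowerSeries A) ∈ {h | ∀ g ∈ idealSeries I, D.mul g h ∈ idealSeries I}) ∧
    (∀ h₁ h₂, h₁ ∈ {h | ∀ g ∈ idealSeries I, D.mul g h ∈ idealSeries I} →
        h₂ ∈ {h | ∀ g ∈ idealSeries I, D.mul g h ∈ idealSeries I} →
        h₁ + h₂ ∈ {h | ∀ g ∈ idealSeries I, D.mul g h ∈ idealSeries I} ∧
        D.mul h₁ h₂ ∈ {h | ∀ g ∈ idealSeries I, D.mul g h ∈ idealSeries I}) ∧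
    (∀ (c : PowerSeries K) h, h ∈ {h | ∀ g ∈ idealSeries I, D.mul g h ∈ idealSeries I} →
        PowerSeries.map (algebraMap K A) c * h ∈
          {h | ∀ g ∈ idealSeries I, D.mul g h ∈ idealSeries I}) ∧
    (∀ g ∈ idealSeries I, g ∈ {h | ∀ g' ∈ idealSeries I, D.mul g' h ∈ idealSeries I}) ∧
    (∀ h ∈ {h | ∀ g ∈ idealSeries I, D.mul g h ∈ idealSeries I}, ∀ g ∈ idealSeries I,
        D.mul h g ∈ idealSeries I ∧ D.mul g h ∈ idealSeries I) ∧
    -- (b) the commutant is `{D_h : h ∈ N_*(I)}`, anti-isomorphic to `N_*(I)/I[[ν]]`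
    (∀ h ∈ {h | ∀ g ∈ idealSeries I, D.mul g h ∈ idealSeries I},
        ∃ Dh : Module.End (PowerSeries K) (PowerSeries A ⧸ idealSeries I),
          (∀ f : PowerSeries A,
            Dh (Ideal.Quotient.mk (idealSeries I) f) = Ideal.Quotient.mk (idealSeries I) (D.mul f h)) ∧
          (∀ f : PowerSeries A, Dh * ρ f = ρ f * Dh)) ∧
    (∀ Dd : Module.End (PowerSeries K) (PowerSeries A ⧸ idealSeries I),
        (∀ f : PowerSeries A, Dd * ρ f = ρ f * Dd) →
        ∃ h ∈ {h | ∀ g ∈ idealSeries I, D.mul g h ∈ idealSeries I},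
          ∀ f : PowerSeries A,
            Dd (Ideal.Quotient.mk (idealSeries I) f) = Ideal.Quotient.mk (idealSeries I) (D.mul f h)) ∧
    (∀ h ∈ {h | ∀ g ∈ idealSeries I, D.mul g h ∈ idealSeries I},
      ∀ h' ∈ {h | ∀ g ∈ idealSeries I, D.mul g h ∈ idealSeries I},
        ((∀ f : PowerSeries A,
            Ideal.Quotient.mk (idealSeries I) (D.mul f h)
              = Ideal.Quotient.mk (idealSeries I) (D.mul f h')) ↔ h - h' ∈ idealSeries I)) ∧
    (∀ (h h' : PowerSeries A)
        (Dh Dh' : Module.End (PowerSeries K) (PowerSeries A ⧸ idealSeries I)),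
        (∀ f : PowerSeries A,
          Dh (Ideal.Quotient.mk (idealSeries I) f) = Ideal.Quotient.mk (idealSeries I) (D.mul f h)) →
        (∀ f : PowerSeries A,
          Dh' (Ideal.Quotient.mk (idealSeries I) f) = Ideal.Quotient.mk (idealSeries I) (D.mul f h')) →
        ∀ f : PowerSeries A,
          (Dh' * Dh) (Ideal.Quotient.mk (idealSeries I) f)
            = Ideal.Quotient.mk (idealSeries I) (D.mul f (D.mul h h'))) := by
  open StarProd in
  refine ⟨one_mem_idealizer, fun h₁ h₂ hh₁ hh₂ ↦ ⟨(D.idealizer I).add_mem hh₁ hh₂,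
      mul_mem_idealizer hh₁ hh₂⟩, fun c h hh ↦ (D.idealizer I).smul_mem c hh,
    fun g hg ↦ idealSeries_le_idealizer hadapt hg, fun h hh g hg ↦ ⟨hadapt h g hg, hh g hg⟩,
    fun h hh ↦ ⟨mulRightQuot hh, mulRightQuot_mk hh, mulRightQuot_commute hρ hh⟩,
    exists_mem_idealizer_of_commute hρ, fun h _ h' _ ↦ mk_mul_eq_mk_mul_iff hadapt h h', ?_⟩
  intro h h' Dh Dh' hDh hDh' f
  rw [Module.End.mul_apply, hDh, hDh', D.mul_assoc]

/-- Let `*` be adapted to the ideal `I` with canonical representation `ρ` on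
`Q = A[[ν]]/I[[ν]]`, and let `N_*(I) = {h : I[[ν]] * h ⊆ I[[ν]]}` be the `*`-idealizer.
Then (a) `N_*(I)` is a unital subalgebra of `(A[[ν]],*)` containing `I[[ν]]` as a
two-sided ideal, and (b) the commutant of `ρ` consists exactly of the operators
`D_h : f + I[[ν]] ↦ f*h + I[[ν]]` with `h ∈ N_*(I)`, two such agreeing iff
`h - h' ∈ I[[ν]]`, and composition corresponds to the opposite multiplication
(`D_{h*h'} = D_{h'} ∘ D_h`), i.e. the commutant is anti-isomorphic to `N_*(I)/I[[ν]]`. -/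
theorem statement3 {K A : Type*} [Field K] [CharZero K] [CommRing A] [Algebra K A]
    (D : StarProd K A) (I : Ideal A)
    (hadapt : ∀ f g : PowerSeries A, g ∈ idealSeries I → D.mul f g ∈ idealSeries I)
    (ρ : PowerSeries A → Module.End (PowerSeries K) (PowerSeries A ⧸ idealSeries I))
    (hρ : ∀ f g : PowerSeries A,
      ρ f (Ideal.Quotient.mk (idealSeries I) g) = Ideal.Quotient.mk (idealSeries I) (D.mul f g)) :
    -- (a) `N_*(I)` is a unital subalgebra containing `I[[ν]]` as a two-sided ideal
    ((1 : PowerSeries A) ∈ {h | ∀ g ∈ idealSeries I, D.mul g h ∈ idealSeries I}) ∧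
    (∀ h₁ h₂, h₁ ∈ {h | ∀ g ∈ idealSeries I, D.mul g h ∈ idealSeries I} →
        h₂ ∈ {h | ∀ g ∈ idealSeries I, D.mul g h ∈ idealSeries I} →
        h₁ + h₂ ∈ {h | ∀ g ∈ idealSeries I, D.mul g h ∈ idealSeries I} ∧
        D.mul h₁ h₂ ∈ {h | ∀ g ∈ idealSeries I, D.mul g h ∈ idealSeries I}) ∧
    (∀ (c : PowerSeries K) h, h ∈ {h | ∀ g ∈ idealSeries I, D.mul g h ∈ idealSeries I} →
        PowerSeries.map (algebraMap K A) c * h ∈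
          {h | ∀ g ∈ idealSeries I, D.mul g h ∈ idealSeries I}) ∧
    (∀ g ∈ idealSeries I, g ∈ {h | ∀ g' ∈ idealSeries I, D.mul g' h ∈ idealSeries I}) ∧
    (∀ h ∈ {h | ∀ g ∈ idealSeries I, D.mul g h ∈ idealSeries I}, ∀ g ∈ idealSeries I,
        D.mul h g ∈ idealSeries I ∧ D.mul g h ∈ idealSeries I) ∧
    -- (b) the commutant is `{D_h : h ∈ N_*(I)}`, anti-isomorphic to `N_*(I)/I[[ν]]`
    (∀ h ∈ {h | ∀ g ∈ idealSeries I, D.mul g h ∈ idealSeries I},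
        ∃ Dh : Module.End (PowerSeries K) (PowerSeries A ⧸ idealSeries I),
          (∀ f : PowerSeries A,
            Dh (Ideal.Quotient.mk (idealSeries I) f) = Ideal.Quotient.mk (idealSeries I) (D.mul f h)) ∧
          (∀ f : PowerSeries A, Dh * ρ f = ρ f * Dh)) ∧
    (∀ Dd : Module.End (PowerSeries K) (PowerSeries A ⧸ idealSeries I),
        (∀ f : PowerSeries A, Dd * ρ f = ρ f * Dd) →
        ∃ h ∈ {h | ∀ g ∈ idealSeries I, D.mul g h ∈ idealSeries I},
          ∀ f : PowerSeries A,
            Dd (Ideal.Quotient.mk (idealSeries I) f) = Ideal.Quotient.mk (idealSeries I) (D.mul f h)) ∧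
    (∀ h ∈ {h | ∀ g ∈ idealSeries I, D.mul g h ∈ idealSeries I},
      ∀ h' ∈ {h | ∀ g ∈ idealSeries I, D.mul g h ∈ idealSeries I},
        ((∀ f : PowerSeries A,
            Ideal.Quotient.mk (idealSeries I) (D.mul f h)
              = Ideal.Quotient.mk (idealSeries I) (D.mul f h')) ↔ h - h' ∈ idealSeries I)) ∧
    (∀ (h h' : PowerSeries A)
        (Dh Dh' : Module.End (PowerSeries K) (PowerSeries A ⧸ idealSeries I)),
        (∀ f : PowerSeries A,
          Dh (Ideal.Quotient.mk (idealSeries I) f) = Ideal.Quotient.mk (idealSeries I) (D.mul f h)) →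
        (∀ f : PowerSeries A,
          Dh' (Ideal.Quotient.mk (idealSeries I) f) = Ideal.Quotient.mk (idealSeries I) (D.mul f h')) →
        ∀ f : PowerSeries A,
          (Dh' * Dh) (Ideal.Quotient.mk (idealSeries I) f)
            = Ideal.Quotient.mk (idealSeries I) (D.mul f (D.mul h h'))) :=
  statement3_general D I hadapt ρ hρ
end

section
/- Let A and A' be Poisson algebras over K and Φ : A' → A a homomorphism of Poisson algebras. Equip the tensor product A' ⊗_K A with the commutative product (a'⊗a)(b'⊗b) = a'b' ⊗ ab and the 'difference' bracket determined by {a'⊗1, b'⊗1} = {a',b'}'⊗1, {1⊗a, 1⊗b} = −1⊗{a,b}, {a'⊗1, 1⊗a} = 0 (extended by Leibniz). Let ε : A' ⊗ A → A be the algebra homomorphism a'⊗a ↦ Φ(a')·a. Then ker ε is closed under the difference bracket, i.e. ker ε is a Poisson subalgebra (and associative ideal) of A' ⊗ A. (This is the algebraic form of Weinstein's theorem that the graph of a Poisson map is coisotropic.) -/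
open scoped TensorProduct

/-- A Poisson algebra structure on a commutative unital `K`-algebra `A`. -/
structure PoissonStr (K A : Type*) [Field K] [CommRing A] [Algebra K A] where
  br : A →ₗ[K] A →ₗ[K] A
  antisymm : ∀ f g : A, br f g = - br g f
  jacobi : ∀ f g h : A, br (br f g) h + br (br h f) g + br (br g h) f = 0
  leibniz : ∀ f g h : A, br (f * g) h = f * br g h + br f h * g

/-- Algebraic form of Weinstein's theorem: let `Φ : A' → A` be a homomorphism of
Poisson algebras, let `br` be the 'difference' Poisson bracket on `A' ⊗_K A`
(antisymmetric, Leibniz, with the stated values on generators), and let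
`ε : A' ⊗ A → A` be the algebra homomorphism `a' ⊗ a ↦ Φ(a')·a`.
Then `ker ε` is an associative ideal of `A' ⊗ A` closed under the bracket. -/
theorem statement6 {K A' A : Type*} [Field K] [CharZero K]
    [CommRing A'] [Algebra K A'] [CommRing A] [Algebra K A]
    (P' : PoissonStr K A') (P : PoissonStr K A)
    (Φ : A' →ₐ[K] A)
    (hΦ : ∀ f g : A', Φ (P'.br f g) = P.br (Φ f) (Φ g))
    (br : A' ⊗[K] A →ₗ[K] A' ⊗[K] A →ₗ[K] A' ⊗[K] A)
    (hanti : ∀ x y : A' ⊗[K] A, br x y = - br y x)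
    (hleibniz : ∀ x y z : A' ⊗[K] A, br (x * y) z = x * br y z + br x z * y)
    (hgen₁ : ∀ a' b' : A', br (a' ⊗ₜ[K] (1 : A)) (b' ⊗ₜ[K] (1 : A))
        = (P'.br a' b') ⊗ₜ[K] (1 : A))
    (hgen₂ : ∀ a b : A, br ((1 : A') ⊗ₜ[K] a) ((1 : A') ⊗ₜ[K] b)
        = - ((1 : A') ⊗ₜ[K] (P.br a b)))
    (hgen₃ : ∀ (a' : A') (a : A), br (a' ⊗ₜ[K] (1 : A)) ((1 : A') ⊗ₜ[K] a) = 0)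
    (ε : A' ⊗[K] A →ₐ[K] A)
    (hε : ∀ (a' : A') (a : A), ε (a' ⊗ₜ[K] a) = Φ a' * a) :
    (∀ x y : A' ⊗[K] A, ε y = 0 → ε (x * y) = 0) ∧
    (∀ x y : A' ⊗[K] A, ε x = 0 → ε y = 0 → ε (br x y) = 0) := by
  have hε1 : ∀ a : A, ε ((1 : A') ⊗ₜ[K] a) = a := by
    intro a; rw [hε, map_one, one_mul]
  -- the "graph" element a'⊗1 - 1⊗Φa'
  set g : A' → A' ⊗[K] A := fun a' => a' ⊗ₜ[K] (1 : A) - (1 : A') ⊗ₜ[K] (Φ a') with hg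
  have hεg : ∀ a' : A', ε (g a') = 0 := by
    intro a'
    simp only [hg, map_sub, hε, hε1, map_one, mul_one, one_mul, sub_self]
  -- the bracket of two graph elements is a graph element
  have hεbrg : ∀ a' b' : A', ε (br (g a') (g b')) = 0 := by
    intro a' b'
    simp only [hg, map_sub, LinearMap.sub_apply]
    rw [hgen₁, hgen₃, hgen₂, hanti ((1 : A') ⊗ₜ[K] (Φ a')) (b' ⊗ₜ[K] (1 : A)),
      hgen₃]
    simp only [map_sub, map_neg, map_zero, hε, hε1, map_one, mul_one, one_mul,
      hΦ, neg_zero, sub_zero, zero_sub, neg_neg, sub_neg_eq_add]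
    ring
  -- bracket of products of graph elements with (1 ⊗ a)'s maps to 0 under ε
  have key0 : ∀ (a' b' : A') (a b : A),
      ε (br (g a' * ((1 : A') ⊗ₜ[K] a)) (g b' * ((1 : A') ⊗ₜ[K] b))) = 0 := by
    intro a' b' a b
    have inner : ε (br (g a') (g b' * ((1 : A') ⊗ₜ[K] b))) = 0 := by
      rw [hanti, hleibniz]
      simp only [map_neg, map_add, map_mul, hεg, hε1, zero_mul, mul_zero,
        neg_eq_zero]
      rw [hanti (g b') (g a'), map_neg, hεbrg]
      ring
    rw [hleibniz]
    simp only [map_add, map_mul, hεg, hε1, zero_mul, inner, mul_zero, add_zero]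
  -- kernel elements are spanned by graph elements times (1 ⊗ a)'s
  have hθ : ∀ x y : A' ⊗[K] A, ε x = 0 → ε y = 0 → ε (br x y) = 0 := by
    -- first prove the unconditional statement about x - 1 ⊗ ε x
    have main : ∀ x y : A' ⊗[K] A,
        ε (br (x - (1 : A') ⊗ₜ[K] (ε x)) (y - (1 : A') ⊗ₜ[K] (ε y))) = 0 := by
      intro x y
      induction x using TensorProduct.induction_on with
      | zero => simp
      | tmul a' a =>
        have hx : (a' ⊗ₜ[K] a : A' ⊗[K] A) - (1 : A') ⊗ₜ[K] (ε (a' ⊗ₜ[K] a))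
            = g a' * ((1 : A') ⊗ₜ[K] a) := by
          simp only [hg, hε, sub_mul, Algebra.TensorProduct.tmul_mul_tmul,
            one_mul, mul_one]
        rw [hx]
        induction y using TensorProduct.induction_on with
        | zero => simp
        | tmul b' b =>
          have hy : (b' ⊗ₜ[K] b : A' ⊗[K] A) - (1 : A') ⊗ₜ[K] (ε (b' ⊗ₜ[K] b))
              = g b' * ((1 : A') ⊗ₜ[K] b) := by
            simp only [hg, hε, sub_mul, Algebra.TensorProduct.tmul_mul_tmul,
              one_mul, mul_one]
          rw [hy]; exact key0 a' b' a b
        | add y₁ y₂ ih₁ ih₂ =>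
          have : (y₁ + y₂) - (1 : A') ⊗ₜ[K] (ε (y₁ + y₂))
              = (y₁ - (1 : A') ⊗ₜ[K] (ε y₁)) + (y₂ - (1 : A') ⊗ₜ[K] (ε y₂)) := by
            rw [map_add, TensorProduct.tmul_add]; ring
          rw [this, map_add, map_add, ih₁, ih₂, add_zero]
      | add x₁ x₂ ih₁ ih₂ =>
        have : (x₁ + x₂) - (1 : A') ⊗ₜ[K] (ε (x₁ + x₂))
            = (x₁ - (1 : A') ⊗ₜ[K] (ε x₁)) + (x₂ - (1 : A') ⊗ₜ[K] (ε x₂)) := by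
          rw [map_add, TensorProduct.tmul_add]; ring
        rw [this, map_add, LinearMap.add_apply, map_add, ih₁, ih₂, add_zero]
    intro x y hx hy
    simpa [hx, hy] using main x y
  exact ⟨fun x y hy => by rw [map_mul, hy, mul_zero], hθ⟩
end

section
/- Let (V, ω) be a finite-dimensional symplectic vector space, C ⊆ V a coisotropic subspace, (V_red = C/C^ω, ω_red) the reduced symplectic vector space, and π : C → V_red the quotient map. Equip V × V_red with the symplectic form ω̂((v,u),(v',u')) := ω(v,v') − ω_red(u,u'). Then the image of the linear map ℓ : C → V × V_red, c ↦ (c, π(c)), is a Lagrangian subspace of (V × V_red, ω̂), i.e. ℓ(C)^{ω̂} = ℓ(C). -/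
/-- Weinstein's Lagrangian embedding, linear version: let `C` be a coisotropic subspace
of a finite-dimensional symplectic vector space `(V,ω)`, `(V_red = C/C^ω, ω_red)` the
reduced symplectic space (`ω_red` characterized by `ω_red([x],[y]) = ω(x,y)`), and
`ℓ : C → V × V_red`, `c ↦ (c, [c])`. Then the image of `ℓ` is a Lagrangian subspace
for the form `ω̂((v,u),(v',u')) = ω(v,v') − ω_red(u,u')`, i.e. the `ω̂`-orthogonal of
`ℓ(C)` equals `ℓ(C)`. -/
theorem statement10 {K V : Type*} [Field K]
    [AddCommGroup V] [Module K V] [FiniteDimensional K V]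
    (ω : V →ₗ[K] V →ₗ[K] K)
    (halt : ∀ v : V, ω v v = 0)
    (hnd : ∀ v : V, (∀ w : V, ω v w = 0) → v = 0)
    (C : Submodule K V)
    (hcoiso : LinearMap.ker (ω.compl₂ C.subtype) ≤ C)
    (B : (↥C ⧸ (LinearMap.ker (ω.compl₂ C.subtype)).comap C.subtype) →ₗ[K]
         (↥C ⧸ (LinearMap.ker (ω.compl₂ C.subtype)).comap C.subtype) →ₗ[K] K)
    (hB : ∀ x y : C, B (Submodule.Quotient.mk x) (Submodule.Quotient.mk y) = ω x y) :
    {p : V × (↥C ⧸ (LinearMap.ker (ω.compl₂ C.subtype)).comap C.subtype) |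
        ∀ c : C, ω p.1 ↑c - B p.2 (Submodule.Quotient.mk c) = 0}
      = Set.range (fun c : C =>
          ((↑c : V),
            (Submodule.Quotient.mk c :
              ↥C ⧸ (LinearMap.ker (ω.compl₂ C.subtype)).comap C.subtype))) := by
  ext p
  constructor
  · rintro hp
    obtain ⟨x, hx⟩ := Submodule.Quotient.mk_surjective _ p.2
    have hxv : ∀ c : C, ω (p.1 - (x : V)) (c : V) = 0 := by
      intro c
      have h1 := hp c
      rw [← hx, hB x c] at h1
      simp only [map_sub, LinearMap.sub_apply]
      linear_combination h1
    have hmem : p.1 - (x : V) ∈ LinearMap.ker (ω.compl₂ C.subtype) := by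
      rw [LinearMap.mem_ker]
      ext c
      simpa using hxv c
    have hvC : p.1 ∈ C := by
      have h2 := C.add_mem (hcoiso hmem) x.2
      simpa using h2
    refine ⟨⟨p.1, hvC⟩, ?_⟩
    have hq : (Submodule.Quotient.mk (⟨p.1, hvC⟩ : C) :
        ↥C ⧸ (LinearMap.ker (ω.compl₂ C.subtype)).comap C.subtype)
        = Submodule.Quotient.mk x := by
      rw [Submodule.Quotient.eq]
      exact Submodule.mem_comap.mpr hmem
    exact Prod.ext rfl (hq.trans hx)
  · rintro ⟨c, rfl⟩
    intro c'
    simp [hB c c']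
end
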